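/- arXiv:1409.6072 — 2 statements merged into one kernel-verified Lean document; each statement's English description precedes it below -/
import Mathlib

section
/- Let n ≥ 2, K a field, S = K[x_1,…,x_n], and I = I(P_n) the edge ideal of the path P_n. Then sdepth(S/I) ≤ ⌈n/3⌉. -/
open MvPolynomial

/-- The edge ideal `I(P_m)` of the path `P_m` on vertices `x_1, …, x_m`
(0-indexed as `X 0, …, X (m-1)`), regarded as an ideal of `S = K[x_1, …, x_n]`:
it is generated by the monomials `X i * X (i+1)` for `i + 2 ≤ m`
(1-indexed: `x_i x_{i+1}` for `1 ≤ i ≤ m - 1`). -/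
noncomputable def pathIdeal (K : Type*) [Field K] (n m : ℕ) :
    Ideal (MvPolynomial (Fin n) K) :=
  Ideal.span {p | ∃ i j : Fin n, (j : ℕ) = (i : ℕ) + 1 ∧ (i : ℕ) + 2 ≤ m ∧ p = X i * X j}

/-- A (combinatorial) Stanley decomposition of `S/I` for a monomial ideal `I` of
`S = K[x_1, …, x_n]`: a finite family of Stanley spaces `u K[Z]`, encoded as pairs
`(u, Z)` of an exponent vector `u` and a set of variables `Z`, such that each
Stanley space consists of monomials not in `I` (so `u K[Z]` is a free
`K[Z]`-module inside `S/I`) and every monomial not in `I` lies in exactly one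
Stanley space (so `S/I` is the direct sum of the Stanley spaces as `ℤⁿ`-graded
`K`-vector spaces). -/
def IsStanleyDecomp {K : Type*} [Field K] {n : ℕ} (I : Ideal (MvPolynomial (Fin n) K))
    (D : Finset ((Fin n →₀ ℕ) × Finset (Fin n))) : Prop :=
  (∀ p ∈ D, ∀ v : Fin n →₀ ℕ, v.support ⊆ p.2 → (monomial (p.1 + v) (1 : K)) ∉ I) ∧
  ∀ a : Fin n →₀ ℕ, (monomial a (1 : K)) ∉ I →
    ∃! p : (Fin n →₀ ℕ) × Finset (Fin n), p ∈ D ∧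
      ∃ v : Fin n →₀ ℕ, v.support ⊆ p.2 ∧ a = p.1 + v

/-- The Stanley depth `sdepth (S/I)` of the quotient by a monomial ideal `I`:
the largest `s` such that some Stanley decomposition of `S/I` has all its
Stanley spaces of dimension `|Z| ≥ s`. -/
noncomputable def sdepth {K : Type*} [Field K] {n : ℕ}
    (I : Ideal (MvPolynomial (Fin n) K)) : ℕ :=
  sSup {s : ℕ | ∃ D, IsStanleyDecomp I D ∧ ∀ p ∈ D, s ≤ p.2.card}

/-! If all spaces `u K[Z]` of a Stanley decomposition of `S/(I(P_m) + (x_{m+1}, …, x_n))` have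
dimension `≥ s`, keep those with `x_{m-1} ∈ Z` and delete `x_{m-1}` from `u` and `Z`: this is a
Stanley decomposition of `S/((I : x_{m-1}^∞) + (x_{m-1})) = S/(I(P_{m-3}) + (x_{m-2}, …, x_n))`,
with spaces of dimension `≥ s - 1`. Descending in steps of three to a path on at most two vertices,
where the space through `1` has dimension at most one, gives `3 s ≤ m + 2`. -/

open Finsupp

section StanleyDecomposition

variable {σ : Type*}

def IsStanleyDecompOf (M : Set (σ →₀ ℕ)) (D : Finset ((σ →₀ ℕ) × Finset σ)) : Prop :=
  (∀ p ∈ D, ∀ v : σ →₀ ℕ, v.support ⊆ p.2 → p.1 + v ∈ M) ∧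
  ∀ a ∈ M, ∃! p : (σ →₀ ℕ) × Finset σ, p ∈ D ∧ ∃ v : σ →₀ ℕ, v.support ⊆ p.2 ∧ a = p.1 + v

theorem isStanleyDecomp_iff {K : Type*} [Field K] {n : ℕ}
    (I : Ideal (MvPolynomial (Fin n) K)) (D : Finset ((Fin n →₀ ℕ) × Finset (Fin n))) :
    IsStanleyDecomp I D ↔ IsStanleyDecompOf {a | monomial a (1 : K) ∉ I} D :=
  Iff.rfl

theorem sdepth_le {K : Type*} [Field K] {n : ℕ} {I : Ideal (MvPolynomial (Fin n) K)} {b : ℕ}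
    (h : ∀ D s, IsStanleyDecomp I D → (∀ p ∈ D, s ≤ p.2.card) → s ≤ b) : sdepth I ≤ b :=
  csSup_le' fun _ ⟨D, hD, hs⟩ => h D _ hD hs

/-- When `M` is the set of exponents of the standard monomials of a monomial ideal `I`, this is the
set of exponents of the standard monomials of `(I : x_c^∞) + (x_c)`. -/
def saturationSlice (M : Set (σ →₀ ℕ)) (c : σ) : Set (σ →₀ ℕ) :=
  {b | b c = 0 ∧ ∀ N, b + single c N ∈ M}

noncomputable def sliceAt [DecidableEq σ] (D : Finset ((σ →₀ ℕ) × Finset σ)) (c : σ) :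
    Finset ((σ →₀ ℕ) × Finset σ) :=
  (D.filter (c ∈ ·.2)).image fun p => (p.1.erase c, p.2.erase c)

theorem erase_add_single_eq_add_single (u : σ →₀ ℕ) {c : σ} {N : ℕ} (h : u c ≤ N) :
    u.erase c + single c N = u + single c (N - u c) := by
  ext i
  rcases eq_or_ne i c with rfl | hi
  · simp only [Finsupp.coe_add, Pi.add_apply, erase_same, single_eq_same]; omega
  · simp [erase_ne hi, single_eq_of_ne hi]

theorem support_add_single_subset [DecidableEq σ] {v : σ →₀ ℕ} {Z : Finset σ} {c : σ}
    (hv : v.support ⊆ Z.erase c) (hc : c ∈ Z) (N : ℕ) : (v + single c N).support ⊆ Z :=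
  support_add.trans (Finset.union_subset (hv.trans (Finset.erase_subset _ _))
    (support_single_subset.trans (Finset.singleton_subset_iff.mpr hc)))

theorem le_card_of_mem_sliceAt [DecidableEq σ] {D : Finset ((σ →₀ ℕ) × Finset σ)} {s : ℕ}
    (hs : ∀ p ∈ D, s + 1 ≤ p.2.card) (c : σ) :
    ∀ p ∈ sliceAt D c, s ≤ p.2.card := by
  simp only [sliceAt, Finset.mem_image, Finset.mem_filter]
  rintro _ ⟨p, ⟨hp, hc⟩, rfl⟩
  have := hs p hp
  rw [Finset.card_erase_of_mem hc]
  omega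

namespace IsStanleyDecompOf

variable {M : Set (σ →₀ ℕ)} {D : Finset ((σ →₀ ℕ) × Finset σ)}

theorem exists_free (hD : IsStanleyDecompOf M D) (h0 : 0 ∈ M) :
    ∃ p ∈ D, ∀ v : σ →₀ ℕ, v.support ⊆ p.2 → v ∈ M := by
  obtain ⟨p, ⟨hp, v, -, h0v⟩, -⟩ := hD.2 0 h0
  have hp0 : p.1 = 0 := (add_eq_zero.mp h0v.symm).1
  exact ⟨p, hp, fun w hw => by simpa [hp0] using hD.1 p hp w hw⟩

variable [DecidableEq σ]

theorem add_mem_saturationSlice_of_mem_sliceAt (hM : IsLowerSet M) (hD : IsStanleyDecompOf M D)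
    (c : σ) :
    ∀ p ∈ sliceAt D c, ∀ v : σ →₀ ℕ, v.support ⊆ p.2 → p.1 + v ∈ saturationSlice M c := by
  simp only [sliceAt, Finset.mem_image, Finset.mem_filter]
  rintro _ ⟨p, ⟨hp, hc⟩, rfl⟩ v hv
  have hvc : v c = 0 := notMem_support_iff.mp fun h => Finset.notMem_erase c p.2 (hv h)
  refine ⟨by simp [hvc], fun N => hM ?_ (hD.1 p hp _ (support_add_single_subset hv hc N))⟩
  calc p.1.erase c + v + single c N ≤ p.1.erase c + single c (p.1 c) + v + single c N := by
        gcongr; exact le_self_add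
    _ = p.1 + (v + single c N) := by rw [erase_add_single, add_assoc]

theorem existsUnique_sliceAt (hD : IsStanleyDecompOf M D) (c : σ) :
    ∀ b ∈ saturationSlice M c, ∃! p : (σ →₀ ℕ) × Finset σ,
      p ∈ sliceAt D c ∧ ∃ v : σ →₀ ℕ, v.support ⊆ p.2 ∧ b = p.1 + v := by
  rintro b ⟨hbc, hbM⟩
  -- `N` exceeds every `u c`, so the space `u K[Z]` containing `b x_c^N` has `c ∈ Z`.
  set N := D.sup (·.1 c) + 1
  have hN : ∀ p ∈ D, p.1 c < N := fun p hp =>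
    Nat.lt_succ_of_le (Finset.le_sup (f := (·.1 c)) hp)
  obtain ⟨p, ⟨hp, v, hv, hbv⟩, huniq⟩ := hD.2 _ (hbM N)
  have hpc : c ∈ p.2 := by
    have := congrArg (· c) hbv
    simp only [Finsupp.coe_add, Pi.add_apply, hbc, single_eq_same] at this
    exact hv (mem_support_iff.mpr (by have := hN p hp; omega))
  refine ⟨(p.1.erase c, p.2.erase c),
    ⟨Finset.mem_image_of_mem _ (Finset.mem_filter.mpr ⟨hp, hpc⟩), v.erase c, ?_, ?_⟩, ?_⟩
  · rw [support_erase]; exact Finset.erase_subset_erase c hv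
  · have := congrArg (erase c) hbv
    rwa [erase_add, erase_add, erase_single, add_zero, erase_of_notMem_support (by simpa)] at this
  · simp only [sliceAt, Finset.mem_image, Finset.mem_filter]
    rintro _ ⟨⟨q, ⟨hq, hqc⟩, rfl⟩, w, hw, rfl⟩
    suffices q = p by rw [this]
    refine huniq q ⟨hq, _, support_add_single_subset hw hqc (N - q.1 c), ?_⟩
    rw [add_right_comm, erase_add_single_eq_add_single _ (hN q hq).le, add_assoc, add_comm w]

theorem sliceAt (hM : IsLowerSet M) (hD : IsStanleyDecompOf M D) (c : σ) :
    IsStanleyDecompOf (saturationSlice M c) (sliceAt D c) :=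
  ⟨hD.add_mem_saturationSlice_of_mem_sliceAt hM c, hD.existsUnique_sliceAt c⟩

end IsStanleyDecompOf

end StanleyDecomposition

section Path

variable {n : ℕ}

/-- Exponents of the standard monomials of `I(P_m)` in `K[x_1, …, x_n]` once the variables beyond
`x_m` are set to zero. -/
def pathStd (n m : ℕ) : Set (Fin n →₀ ℕ) :=
  {a | (∀ i : Fin n, m ≤ (i : ℕ) → a i = 0) ∧ ∀ i j : Fin n, (j : ℕ) = i + 1 → a i = 0 ∨ a j = 0}

theorem zero_mem_pathStd (m : ℕ) : (0 : Fin n →₀ ℕ) ∈ pathStd n m :=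
  ⟨fun _ _ => rfl, fun _ _ _ => Or.inl rfl⟩

theorem isLowerSet_pathStd (m : ℕ) : IsLowerSet (pathStd n m) := by
  rintro a b hba ⟨hzero, hedge⟩
  have hle : ∀ i, a i = 0 → b i = 0 := fun i h => Nat.eq_zero_of_le_zero (h ▸ hba i)
  exact ⟨fun i hi => hle i (hzero i hi), fun i j hij => (hedge i j hij).imp (hle i) (hle j)⟩

theorem monomial_mem_pathIdeal_iff (K : Type*) [Field K] (m : ℕ) (a : Fin n →₀ ℕ) :
    monomial a (1 : K) ∈ pathIdeal K n m ↔
      ∃ i j : Fin n, (j : ℕ) = i + 1 ∧ (i : ℕ) + 2 ≤ m ∧ a i ≠ 0 ∧ a j ≠ 0 := by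
  have hgen : {p | ∃ i j : Fin n, (j : ℕ) = i + 1 ∧ (i : ℕ) + 2 ≤ m ∧ p = X i * X j} =
      (fun d => monomial d (1 : K)) '' {d | ∃ i j : Fin n, (j : ℕ) = i + 1 ∧ (i : ℕ) + 2 ≤ m ∧
        d = single i 1 + single j 1} := by
    ext p
    simp only [Set.mem_image, X, monomial_mul, one_mul]
    constructor
    · rintro ⟨i, j, hij, him, rfl⟩; exact ⟨_, ⟨i, j, hij, him, rfl⟩, rfl⟩
    · rintro ⟨_, ⟨i, j, hij, him, rfl⟩, rfl⟩; exact ⟨i, j, hij, him, rfl⟩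
  classical
  rw [pathIdeal, hgen, mem_ideal_span_monomial_image, support_monomial, if_neg one_ne_zero]
  simp only [Finset.mem_singleton, forall_eq]
  constructor
  · rintro ⟨_, ⟨i, j, hij, him, rfl⟩, hle⟩
    have hne : i ≠ j := fun h => by simp [h] at hij
    refine ⟨i, j, hij, him, ?_, ?_⟩
    · have := hle i; simp [hne.symm] at this; omega
    · have := hle j; simp [hne] at this; omega
  · rintro ⟨i, j, hij, him, hi, hj⟩
    have hne : i ≠ j := fun h => by simp [h] at hij
    refine ⟨_, ⟨i, j, hij, him, rfl⟩, fun k => ?_⟩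
    rcases eq_or_ne k i with rfl | hki
    · simp [hne]; omega
    rcases eq_or_ne k j with rfl | hkj
    · simp [hne.symm]; omega
    · simp [hki.symm, hkj.symm]

theorem setOf_monomial_notMem_pathIdeal (K : Type*) [Field K] :
    {a | monomial a (1 : K) ∉ pathIdeal K n n} = pathStd n n := by
  ext a
  simp only [monomial_mem_pathIdeal_iff, pathStd]
  constructor
  · intro h
    refine ⟨fun i hi => absurd i.isLt (by omega), fun i j hij => ?_⟩
    by_contra! hne
    exact h ⟨i, j, hij, by omega, hne⟩
  · rintro ⟨-, hedge⟩ ⟨i, j, hij, -, hi, hj⟩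
    exact (hedge i j hij).elim hi hj

theorem saturationSlice_pathStd {k : ℕ} (hk : k + 3 ≤ n) :
    saturationSlice (pathStd n (k + 3)) ⟨k + 1, by omega⟩ = pathStd n k := by
  ext b
  constructor
  · rintro ⟨hbc, hbM⟩
    obtain ⟨hzero, hedge⟩ := isLowerSet_pathStd _ le_self_add (hbM 1)
    obtain ⟨-, hedge₁⟩ := hbM 1
    refine ⟨fun i hi => ?_, hedge⟩
    rcases (by omega : (i : ℕ) = k ∨ (i : ℕ) = k + 1 ∨ (i : ℕ) = k + 2 ∨ k + 3 ≤ i)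
      with h | h | h | h
    · have := hedge₁ i ⟨k + 1, by omega⟩ (by simp [h])
      simpa [single_apply, Fin.ext_iff, h] using this
    · simpa [← h] using hbc
    · have := hedge₁ ⟨k + 1, by omega⟩ i (by simp [h])
      simpa [single_apply, Fin.ext_iff, h] using this
    · exact hzero i h
  · rintro ⟨hzero, hedge⟩
    refine ⟨hzero _ (by simp), fun N => ⟨fun i hi => ?_, fun i j hij => ?_⟩⟩
    · simp [single_apply, Fin.ext_iff, hzero i (by omega)]
      omega
    · by_cases hi : (i : ℕ) = k + 1
      · right; simp [single_apply, Fin.ext_iff, hzero j (by omega)]; omega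
      by_cases hj : (j : ℕ) = k + 1
      · left; simp [single_apply, Fin.ext_iff, hzero i (by omega)]; omega
      simpa [single_apply, Fin.ext_iff, Ne.symm hi, Ne.symm hj] using hedge i j hij

theorem card_le_of_free_pathStd {m : ℕ} (hm : m ≤ 2) {Z : Finset (Fin n)}
    (hZ : ∀ v : Fin n →₀ ℕ, v.support ⊆ Z → v ∈ pathStd n m) : 3 * Z.card ≤ m + 2 := by
  have hlt : ∀ i ∈ Z, (i : ℕ) < m := by
    intro i hi
    by_contra! h
    simpa using (hZ (single i 1) (by simpa using hi)).1 i h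
  have hcard : Z.card ≤ 1 := by
    refine Finset.card_le_one.mpr fun i hi j hj => ?_
    by_contra hne
    have hsupp : (single i 1 + single j 1).support ⊆ Z := support_add.trans
      (Finset.union_subset (by simpa using hi) (by simpa using hj))
    have hedge := (hZ _ hsupp).2
    have hne' : (i : ℕ) ≠ j := fun h => hne (Fin.ext h)
    have := hlt i hi
    have := hlt j hj
    rcases (by omega : (j : ℕ) = i + 1 ∨ (i : ℕ) = j + 1) with h | h
    · simpa [single_apply, Fin.ext_iff, hne', hne'.symm] using hedge i j h
    · simpa [single_apply, Fin.ext_iff, hne', hne'.symm] using hedge j i h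
  rcases Nat.eq_zero_or_pos m with rfl | hm0
  · simp [Finset.eq_empty_of_forall_notMem fun i hi => (hlt i hi).not_ge (Nat.zero_le _)]
  · omega

theorem three_mul_le_of_isStanleyDecompOf_pathStd {m : ℕ} (hm : m ≤ n)
    {D : Finset ((Fin n →₀ ℕ) × Finset (Fin n))} (hD : IsStanleyDecompOf (pathStd n m) D)
    {s : ℕ} (hs : ∀ p ∈ D, s ≤ p.2.card) : 3 * s ≤ m + 2 := by
  induction m using Nat.strong_induction_on generalizing D s with
  | _ m ih =>
  rcases lt_or_ge m 3 with hm3 | hm3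
  · obtain ⟨p, hp, hfree⟩ := hD.exists_free (zero_mem_pathStd m)
    have := card_le_of_free_pathStd (by omega) hfree
    have := hs p hp
    omega
  obtain ⟨k, rfl⟩ : ∃ k, m = k + 3 := ⟨m - 3, by omega⟩
  obtain _ | t := s
  · omega
  have hD' := hD.sliceAt (isLowerSet_pathStd _) ⟨k + 1, by omega⟩
  rw [saturationSlice_pathStd hm] at hD'
  have := ih k (by omega) (by omega) hD' (le_card_of_mem_sliceAt hs _)
  omega

end Path

theorem sdepth_pathIdeal_le_general {K : Type*} [Field K] (n : ℕ) :
    (sdepth (pathIdeal K n n) : ℤ) ≤ ⌈(n : ℚ) / 3⌉ := by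
  have hsd : 3 * sdepth (pathIdeal K n n) ≤ n + 2 := by
    suffices sdepth (pathIdeal K n n) ≤ (n + 2) / 3 by omega
    refine sdepth_le fun D s hD hs => ?_
    rw [isStanleyDecomp_iff, setOf_monomial_notMem_pathIdeal] at hD
    have := three_mul_le_of_isStanleyDecompOf_pathStd le_rfl hD hs
    omega
  rw [Int.le_ceil_iff, lt_div_iff₀ three_pos]
  push_cast
  have : (3 * sdepth (pathIdeal K n n) : ℚ) ≤ n + 2 := by exact_mod_cast hsd
  linarith

/-- For `n ≥ 2` and `I = I(P_n)` the edge ideal of the path `P_n` in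
`S = K[x_1, …, x_n]`, one has `sdepth (S/I) ≤ ⌈n/3⌉`. -/
theorem sdepth_pathIdeal_le {K : Type*} [Field K] (n : ℕ) (hn : 2 ≤ n) :
    (sdepth (pathIdeal K n n) : ℤ) ≤ ⌈(n : ℚ) / 3⌉ :=
  sdepth_pathIdeal_le_general n
end

section
/- Let k ≥ 2, n = 3k+2, and let I = I(P_n) be the edge ideal of the path P_n in S = K[x_1,…,x_n] over a field K. Let P = {a ∈ N^n : x^a ∉ I and x^a divides x_1x_2⋯x_n} be the characteristic poset of S/I, let α = Σ_{i=1}^{k−1} e_{3i−1} ∈ N^n, and let P_{k+2,α} = {a ∈ P : |a| = k+2 and x^α divides x^a}. Then P_{k+2,α} = {α + e_{3k−2} + e_{3k} + e_{3k+2}}; moreover A = Σ_{i=1}^{k} e_{3i−1} belongs to P and |A| = k. -/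
/-!
A squarefree monomial `x^a` lies outside `I(P_n)` exactly when `a` is a 0/1 vector with no two
adjacent ones. If moreover `x^α ∣ x^a`, each block `x_{3i-2}, x_{3i-1}, x_{3i}` with `i < k`
carries exactly the one of `α` (its neighbours are killed), so these `3(k-1)` places contribute
`k - 1` to the degree. The remaining five places must carry three pairwise non-adjacent ones,
which forces the pattern `1 0 1 0 1`. Everything is read off from `a` extended by zero to `ℕ`.
-/

open MvPolynomial

open Finset

theorem Finsupp.single_add_single_le_iff {ι : Type*} {i j : ι} (hij : i ≠ j) {x y : ℕ}
    {f : ι →₀ ℕ} : single i x + single j y ≤ f ↔ x ≤ f i ∧ y ≤ f j := by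
  refine ⟨fun h => ⟨by simpa [hij] using h i, by simpa [hij.symm] using h j⟩, ?_⟩
  rintro ⟨hi, hj⟩ p
  by_cases hpi : i = p <;> by_cases hpj : j = p <;> simp_all

theorem monomial_one_mem_pathIdeal_iff {K : Type*} [Field K] {n m : ℕ} (a : Fin n →₀ ℕ) :
    monomial a (1 : K) ∈ pathIdeal K n m ↔
      ∃ i j : Fin n, (j : ℕ) = i + 1 ∧ (i : ℕ) + 2 ≤ m ∧ 1 ≤ a i ∧ 1 ≤ a j := by
  have hgen :
      {p | ∃ i j : Fin n, (j : ℕ) = (i : ℕ) + 1 ∧ (i : ℕ) + 2 ≤ m ∧ p = X i * X j} =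
      (fun s => monomial s (1 : K)) '' {s | ∃ i j : Fin n, (j : ℕ) = (i : ℕ) + 1 ∧
        (i : ℕ) + 2 ≤ m ∧ s = Finsupp.single i 1 + Finsupp.single j 1} := by
    ext p
    simp only [Set.mem_ofPred_eq, Set.mem_image, X, monomial_mul, mul_one]
    constructor
    · rintro ⟨i, j, hij, hm, rfl⟩
      exact ⟨_, ⟨i, j, hij, hm, rfl⟩, rfl⟩
    · rintro ⟨s, ⟨i, j, hij, hm, rfl⟩, rfl⟩
      exact ⟨i, j, hij, hm, rfl⟩
  rw [pathIdeal, hgen, mem_ideal_span_monomial_image,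
    support_monomial (h := isFalse one_ne_zero), if_neg one_ne_zero]
  simp only [mem_singleton, forall_eq, Set.mem_ofPred_eq]
  constructor
  · rintro ⟨s, ⟨i, j, hij, hm, rfl⟩, hle⟩
    have hne : i ≠ j := fun h => by rw [h] at hij; omega
    exact ⟨i, j, hij, hm, (Finsupp.single_add_single_le_iff hne).1 hle⟩
  · rintro ⟨i, j, hij, hm, hle⟩
    have hne : i ≠ j := fun h => by rw [h] at hij; omega
    exact ⟨_, ⟨i, j, hij, hm, rfl⟩, (Finsupp.single_add_single_le_iff hne).2 hle⟩

theorem monomial_one_dvd_prod_X_iff {σ R : Type*} [Fintype σ] [CommSemiring R] [Nontrivial R]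
    (a : σ →₀ ℕ) : monomial a (1 : R) ∣ ∏ i, X i ↔ ∀ i, a i ≤ 1 := by
  rw [show ∏ i, (X i : MvPolynomial σ R) = monomial (∑ i, Finsupp.single i 1) 1 from
      (monomial_sum_one _ _).symm, monomial_one_dvd_monomial_one, Finsupp.le_def]
  simp only [Finsupp.coe_finsetSum, Finset.sum_apply, Finsupp.univ_sum_single_apply']

section natExtend

variable {n : ℕ}

def natExtend (a : Fin n →₀ ℕ) (p : ℕ) : ℕ := if h : p < n then a ⟨p, h⟩ else 0

@[simp]
theorem natExtend_val (a : Fin n →₀ ℕ) (i : Fin n) : natExtend a i = a i := dif_pos i.isLt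

theorem natExtend_of_le (a : Fin n →₀ ℕ) {p : ℕ} (hp : n ≤ p) : natExtend a p = 0 :=
  dif_neg (by omega)

theorem natExtend_le_one (a : Fin n →₀ ℕ) (ha : ∀ i, a i ≤ 1) (p : ℕ) :
    natExtend a p ≤ 1 := by
  unfold natExtend
  split_ifs
  exacts [ha _, zero_le_one]

theorem natExtend_injective : Function.Injective (natExtend (n := n)) := fun a b h =>
  Finsupp.ext fun i => by simpa using congrFun h i

theorem natExtend_le_natExtend_iff {a b : Fin n →₀ ℕ} :
    natExtend a ≤ natExtend b ↔ a ≤ b := by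
  refine ⟨fun h i => by simpa using h i, fun h p => ?_⟩
  unfold natExtend
  split_ifs
  exacts [h _, le_rfl]

theorem natExtend_add (a b : Fin n →₀ ℕ) : natExtend (a + b) = natExtend a + natExtend b := by
  funext p
  simp only [Pi.add_apply, natExtend]
  split_ifs <;> simp

theorem natExtend_single (q : ℕ) (hq : q < n) (x : ℕ) :
    natExtend (Finsupp.single (⟨q, hq⟩ : Fin n) x) = Pi.single q x := by
  funext p
  by_cases hp : p < n
  · rw [show p = ((⟨p, hp⟩ : Fin n) : ℕ) from rfl, natExtend_val, Finsupp.single_apply,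
      Pi.single_apply]
    simp [Fin.ext_iff, eq_comm]
  · rw [natExtend_of_le _ (by omega), Pi.single_eq_of_ne (by omega)]

theorem sum_range_natExtend (a : Fin n →₀ ℕ) :
    ∑ p ∈ range n, natExtend a p = ∑ i, a i := by
  rw [← Fin.sum_univ_eq_sum_range]
  simp

end natExtend

theorem monomial_notMem_pathIdeal_and_dvd_prod_X_iff {K : Type*} [Field K] {n : ℕ}
    (a : Fin n →₀ ℕ) :
    (monomial a (1 : K) ∉ pathIdeal K n n ∧ monomial a (1 : K) ∣ ∏ i : Fin n, X i) ↔
      ∀ p, natExtend a p + natExtend a (p + 1) ≤ 1 := by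
  rw [monomial_one_mem_pathIdeal_iff, monomial_one_dvd_prod_X_iff]
  constructor
  · rintro ⟨hind, hsq⟩ p
    by_cases hp : p + 1 < n
    · have hi : natExtend a p = a ⟨p, by omega⟩ := natExtend_val a ⟨p, by omega⟩
      have hj : natExtend a (p + 1) = a ⟨p + 1, hp⟩ := natExtend_val a ⟨p + 1, hp⟩
      rw [hi, hj]
      have := hsq ⟨p, by omega⟩
      have := hsq ⟨p + 1, hp⟩
      by_contra hlt
      exact hind
        ⟨⟨p, by omega⟩, ⟨p + 1, hp⟩, rfl, show p + 2 ≤ n by omega, by omega, by omega⟩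
    · rw [natExtend_of_le a (by omega : n ≤ p + 1), add_zero]
      exact natExtend_le_one a hsq p
  · intro h
    constructor
    · rintro ⟨i, j, hij, -, hi, hj⟩
      have := h i
      rw [← hij, natExtend_val, natExtend_val] at this
      omega
    · intro i
      have := h i
      rw [natExtend_val] at this
      omega

def everyThird (M p : ℕ) : ℕ := if p % 3 = 1 ∧ p < 3 * M then 1 else 0

/-- The exponent `α + e_{3k-2} + e_{3k} + e_{3k+2}`, 0-indexed. -/
def pathPattern (k : ℕ) : ℕ → ℕ :=
  everyThird (k - 1) + Pi.single (3 * k - 3) 1 + Pi.single (3 * k - 1) 1 + Pi.single (3 * k + 1) 1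

theorem sum_range_everyThird (M N : ℕ) :
    ∑ p ∈ range N, everyThird M p = min M ((N + 1) / 3) := by
  induction N with
  | zero => simp
  | succ N ih =>
    rw [sum_range_succ, ih, everyThird]
    split_ifs <;> omega

theorem everyThird_add_everyThird_succ_le_one (M p : ℕ) :
    everyThird M p + everyThird M (p + 1) ≤ 1 := by
  unfold everyThird
  split_ifs <;> omega

theorem pathPattern_add_pathPattern_succ_le_one {k : ℕ} (hk : 1 ≤ k) (p : ℕ) :
    pathPattern k p + pathPattern k (p + 1) ≤ 1 := by
  simp only [pathPattern, Pi.add_apply, Pi.single_apply, everyThird]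
  split_ifs <;> omega

theorem sum_range_pathPattern {k : ℕ} (hk : 1 ≤ k) :
    ∑ p ∈ range (3 * k + 2), pathPattern k p = k + 2 := by
  simp only [pathPattern, Pi.add_apply, sum_add_distrib, sum_pi_single', mem_range,
    sum_range_everyThird]
  split_ifs <;> omega

theorem eq_everyThird_of_lt {f : ℕ → ℕ} {M : ℕ} (hadj : ∀ p, f p + f (p + 1) ≤ 1)
    (hα : everyThird M ≤ f) {p : ℕ} (hp : p < 3 * M) : f p = everyThird M p := by
  have hone : ∀ q < 3 * M, q % 3 = 1 → f q = 1 := fun q hq hq₁ => by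
    have hle : everyThird M q ≤ f q := hα q
    rw [everyThird, if_pos ⟨hq₁, hq⟩] at hle
    have := hadj q
    omega
  rw [everyThird]
  split_ifs with h
  · exact hone p hp h.1
  · have : p % 3 ≠ 1 := fun h₁ => h ⟨h₁, hp⟩
    rcases (by omega : p % 3 = 0 ∨ p % 3 = 2) with h₀ | h₂
    · have := hone (p + 1) (by omega) (by omega)
      have := hadj p
      omega
    · obtain ⟨q, rfl⟩ : ∃ q, p = q + 1 := ⟨p - 1, by omega⟩
      have := hone q (by omega) (by omega)
      have := hadj q
      omega

theorem eq_pathPattern {k : ℕ} (hk : 1 ≤ k) {f : ℕ → ℕ}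
    (hf : ∀ p, 3 * k + 2 ≤ p → f p = 0)
    (hadj : ∀ p, f p + f (p + 1) ≤ 1) (hsum : ∑ p ∈ range (3 * k + 2), f p = k + 2)
    (hα : everyThird (k - 1) ≤ f) : f = pathPattern k := by
  obtain ⟨M, rfl⟩ : ∃ M, k = M + 1 := ⟨k - 1, by omega⟩
  have hhead : ∀ p < 3 * M, f p = everyThird M p := fun p hp => eq_everyThird_of_lt hadj hα hp
  have hhead_sum : ∑ p ∈ range (3 * M), f p = M := by
    rw [sum_congr rfl fun p hp => hhead p (mem_range.1 hp), sum_range_everyThird]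
    omega
  rw [show 3 * (M + 1) + 2 = 3 * M + 5 by ring] at hsum hf
  simp only [sum_range_succ, hhead_sum] at hsum
  have htail : f (3 * M) = 1 ∧ f (3 * M + 1) = 0 ∧ f (3 * M + 2) = 1 ∧ f (3 * M + 3) = 0 ∧
      f (3 * M + 4) = 1 := by
    have h₀ : f (3 * M) + f (3 * M + 1) ≤ 1 := hadj _
    have h₁ : f (3 * M + 1) + f (3 * M + 2) ≤ 1 := hadj _
    have h₂ : f (3 * M + 2) + f (3 * M + 3) ≤ 1 := hadj _
    have h₃ : f (3 * M + 3) + f (3 * M + 4) ≤ 1 := hadj _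
    have h₄ : f (3 * M + 4) + f (3 * M + 5) ≤ 1 := hadj _
    omega
  funext p
  simp only [pathPattern, Pi.add_apply, Pi.single_apply, add_tsub_cancel_right]
  by_cases hp : 3 * M + 5 ≤ p
  · rw [hf p hp, everyThird]
    split_ifs <;> omega
  rcases lt_or_ge p (3 * M) with hp | hp
  · rw [hhead p hp]
    split_ifs <;> omega
  · rcases (by omega : p = 3 * M ∨ p = 3 * M + 1 ∨ p = 3 * M + 2 ∨ p = 3 * M + 3 ∨
      p = 3 * M + 4) with rfl | rfl | rfl | rfl | rfl <;>
    · rw [everyThird]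
      split_ifs <;> omega

theorem eq_pathPattern_iff {k : ℕ} (hk : 1 ≤ k) {f : ℕ → ℕ}
    (hf : ∀ p, 3 * k + 2 ≤ p → f p = 0) :
    ((∀ p, f p + f (p + 1) ≤ 1) ∧ ∑ p ∈ range (3 * k + 2), f p = k + 2 ∧
      everyThird (k - 1) ≤ f) ↔ f = pathPattern k := by
  refine ⟨fun ⟨hadj, hsum, hα⟩ => eq_pathPattern hk hf hadj hsum hα, ?_⟩
  rintro rfl
  exact ⟨pathPattern_add_pathPattern_succ_le_one hk, sum_range_pathPattern hk,
    fun p => by simp only [pathPattern, Pi.add_apply]; omega⟩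

theorem sum_range_ite_three_mul_add_one (M p : ℕ) :
    ∑ i ∈ range M, (if 3 * i + 1 = p then 1 else 0) = everyThird M p := by
  induction M with
  | zero => simp [everyThird]
  | succ M ih =>
    rw [sum_range_succ, ih, everyThird, everyThird]
    split_ifs <;> omega

theorem natExtend_sum_single_three_mul_add_one {n M : ℕ}
    (h : ∀ i : Fin M, 3 * (i : ℕ) + 1 < n) :
    natExtend (∑ i : Fin M, Finsupp.single (⟨3 * (i : ℕ) + 1, h i⟩ : Fin n) 1) =
      everyThird M := by
  funext p
  by_cases hp : p < n
  · rw [show p = (⟨p, hp⟩ : Fin n) from rfl, natExtend_val, Finsupp.finsetSum_apply,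
      ← sum_range_ite_three_mul_add_one, ← Fin.sum_univ_eq_sum_range]
    simp [Finsupp.single_apply, Fin.ext_iff]
  · rw [natExtend_of_le _ (by omega), everyThird, if_neg]
    rintro ⟨hp₁, hp₃⟩
    have := h ⟨p / 3, by omega⟩
    simp only at this
    omega

/-- Let `k ≥ 2`, `n = 3k + 2` and `I = I(P_n)` in `S = K[x_1, …, x_n]`. In the
characteristic poset `P = {a ∈ ℕⁿ : x ^ a ∉ I and x ^ a ∣ x_1 ⋯ x_n}` of `S/I`,
with `α = Σ_{i=1}^{k-1} e_{3i-1}` (written 0-indexed below), one has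
`P_{k+2, α} = {α + e_{3k-2} + e_{3k} + e_{3k+2}}`; moreover
`A = Σ_{i=1}^{k} e_{3i-1}` belongs to `P` and `|A| = k`. -/
theorem charPoset_path_three_mul_add_two {K : Type*} [Field K] (k n : ℕ) (hk : 2 ≤ k)
    (hn : n = 3 * k + 2) :
    ({a : Fin n →₀ ℕ |
        ((monomial a (1 : K)) ∉ pathIdeal K n n ∧ (monomial a (1 : K)) ∣ ∏ i : Fin n, X i) ∧
        (∑ j : Fin n, a j) = k + 2 ∧
        (monomial (∑ i : Fin (k - 1), Finsupp.single (⟨3 * (i : ℕ) + 1, by omega⟩ : Fin n) 1)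
          (1 : K)) ∣ (monomial a (1 : K))} =
      {(∑ i : Fin (k - 1), Finsupp.single (⟨3 * (i : ℕ) + 1, by omega⟩ : Fin n) 1) +
        Finsupp.single (⟨3 * k - 3, by omega⟩ : Fin n) 1 +
        Finsupp.single (⟨3 * k - 1, by omega⟩ : Fin n) 1 +
        Finsupp.single (⟨3 * k + 1, by omega⟩ : Fin n) 1}) ∧
    ((monomial (∑ i : Fin k, Finsupp.single (⟨3 * (i : ℕ) + 1, by omega⟩ : Fin n) 1)
        (1 : K)) ∉ pathIdeal K n n ∧
      (monomial (∑ i : Fin k, Finsupp.single (⟨3 * (i : ℕ) + 1, by omega⟩ : Fin n) 1)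
        (1 : K)) ∣ ∏ i : Fin n, X i) ∧
    (∑ j : Fin n, (∑ i : Fin k, Finsupp.single (⟨3 * (i : ℕ) + 1, by omega⟩ : Fin n) 1) j)
      = k := by
  subst hn
  refine ⟨?_, ?_, ?_⟩
  · ext a
    simp only [Set.mem_ofPred_eq, Set.mem_singleton_iff,
      monomial_notMem_pathIdeal_and_dvd_prod_X_iff, monomial_one_dvd_monomial_one,
      ← natExtend_le_natExtend_iff, ← sum_range_natExtend, ← natExtend_injective.eq_iff,
      natExtend_add, natExtend_single, natExtend_sum_single_three_mul_add_one]
    exact eq_pathPattern_iff (by omega) fun p hp => natExtend_of_le a hp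
  · rw [monomial_notMem_pathIdeal_and_dvd_prod_X_iff, natExtend_sum_single_three_mul_add_one]
    exact everyThird_add_everyThird_succ_le_one k
  · rw [← sum_range_natExtend, natExtend_sum_single_three_mul_add_one, sum_range_everyThird]
    omega
end
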